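/- arXiv:2406.07656 — 2 statements merged into one kernel-verified Lean document; each statement's English description precedes it below -/
import Mathlib

section
/- If φ ∈ H^∞(𝔻) is not univalent, then the analytic Toeplitz operator M_φ on H²(𝔻) does not have minimal commutant; equivalently, M_z* does not belong to the WOT-closure of the polynomials in M_φ*. -/
noncomputable section
open Complex Filter Topology

/-- The Hardy space `H²(𝔻)`, modelled as the Hilbert space of square-summable
Taylor coefficient sequences. -/
abbrev H2 : Type := lp (fun _ : ℕ => ℂ) 2

/-- The open unit disk `𝔻`. -/
def unitDisk : Set ℂ := Metric.ball 0 1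

/-- Evaluation of an element of `H²(𝔻)` at a point of the disk, via its Taylor series. -/
def ev (f : H2) (a : ℂ) : ℂ := ∑' n, f n * a ^ n

/-- `φ ∈ H^∞(𝔻)`: bounded analytic function on the unit disk. -/
def Hinf (φ : ℂ → ℂ) : Prop :=
  DifferentiableOn ℂ φ unitDisk ∧ ∃ C : ℝ, ∀ z ∈ unitDisk, ‖φ z‖ ≤ C

/-- `M` is the analytic Toeplitz (multiplication) operator `M_φ` with symbol `φ`. -/
def IsMulOp (φ : ℂ → ℂ) (M : H2 →L[ℂ] H2) : Prop :=
  ∀ (f : H2), ∀ a ∈ unitDisk, ev (M f) a = φ a * ev f a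

/-- The commutant of a bounded operator `T`. -/
def commutant {H : Type*} [NormedAddCommGroup H] [InnerProductSpace ℂ H]
    (T : H →L[ℂ] H) : Set (H →L[ℂ] H) :=
  {A | A ∘L T = T ∘L A}

/-- The double commutant of a bounded operator `T`. -/
def doubleCommutant {H : Type*} [NormedAddCommGroup H] [InnerProductSpace ℂ H]
    (T : H →L[ℂ] H) : Set (H →L[ℂ] H) :=
  {A | ∀ B ∈ commutant T, A ∘L B = B ∘L A}

/-- The unital algebra generated by `T`: all polynomials in `T`. -/
def polyAlg {H : Type*} [NormedAddCommGroup H] [InnerProductSpace ℂ H]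
    (T : H →L[ℂ] H) : Set (H →L[ℂ] H) :=
  {A | ∃ p : Polynomial ℂ, A = Polynomial.aeval T p}

/-- The closure of a set of operators in the weak operator topology. -/
def wotClosure {H : Type*} [NormedAddCommGroup H] [InnerProductSpace ℂ H]
    (S : Set (H →L[ℂ] H)) : Set (H →L[ℂ] H) :=
  (fun A : H →L[ℂ] H => ContinuousLinearMapWOT.ofCLM A) ⁻¹'
    (closure ((fun A : H →L[ℂ] H => ContinuousLinearMapWOT.ofCLM A) '' S))

/-!
Pick `a ≠ b` in `𝔻` with `φ a = φ b` and let `k_a, k_b` be the Szegő kernels. For every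
polynomial `q`, `⟪k_a, q(M_φ) 1⟫ = q(φ a) = ⟪k_b, q(M_φ) 1⟫`, and this equation is WOT-closed;
`M_z` commutes with `M_φ` but gives `a ≠ b`. Dually, `k_a` is an eigenvector of `M_φ*` with
eigenvalue `conj (φ a)`, so `⟪1, q(M_φ*) k_a⟫ = ⟪1, q(M_φ*) k_b⟫`, while `M_z*` gives
`conj a ≠ conj b`.
-/

open scoped InnerProductSpace ComplexConjugate

section WOT

variable {H : Type*} [NormedAddCommGroup H] [InnerProductSpace ℂ H]

lemma inner_apply_eq_of_mem_wotClosure {S : Set (H →L[ℂ] H)} {x₁ x₂ y₁ y₂ : H}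
    (hS : ∀ A ∈ S, ⟪y₁, A x₁⟫_ℂ = ⟪y₂, A x₂⟫_ℂ) {B : H →L[ℂ] H} (hB : B ∈ wotClosure S) :
    ⟪y₁, B x₁⟫_ℂ = ⟪y₂, B x₂⟫_ℂ := by
  have hcont (x y : H) : Continuous fun A : H →WOT[ℂ] H => ⟪y, A x⟫_ℂ :=
    ContinuousLinearMapWOT.continuous_dual_apply x (innerSL ℂ y)
  have hsub : (fun A : H →L[ℂ] H => ContinuousLinearMapWOT.ofCLM A) '' S ⊆
      {A : H →WOT[ℂ] H | ⟪y₁, A x₁⟫_ℂ = ⟪y₂, A x₂⟫_ℂ} := by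
    rintro _ ⟨A, hA, rfl⟩
    exact hS A hA
  exact closure_minimal hsub (isClosed_eq (hcont x₁ y₁) (hcont x₂ y₂)) hB

end WOT

lemma ContinuousLinearMap.aeval_apply_of_apply_eq_smul {E : Type*} [NormedAddCommGroup E]
    [NormedSpace ℂ E] {T : E →L[ℂ] E} {x : E} {μ : ℂ} (h : T x = μ • x) (p : Polynomial ℂ) :
    Polynomial.aeval T p x = p.eval μ • x := by
  induction p using Polynomial.induction_on with
  | C c => simp [Algebra.algebraMap_eq_smul_one]
  | add p q hp hq => simp [hp, hq, add_smul]
  | monomial n c ih =>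
    rw [pow_succ, ← mul_assoc, map_mul, Polynomial.aeval_X, mul_apply_eq_comp, h,
      map_smul, ih, smul_smul, Polynomial.eval_mul_X, mul_comm]

def szegoKernel {a : ℂ} (ha : a ∈ unitDisk) : H2 :=
  ⟨fun n => conj a ^ n, memℓp_gen <| by
    have hsq : ‖a‖ ^ 2 < 1 := pow_lt_one₀ (norm_nonneg a) (mem_ball_zero_iff.mp ha) two_ne_zero
    convert summable_geometric_of_lt_one (by positivity) hsq using 2 with n
    rw [ENNReal.toReal_ofNat, Real.rpow_two, norm_pow, RCLike.norm_conj, ← pow_mul, ← pow_mul,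
      mul_comm]⟩

lemma ev_eq_inner_szegoKernel (f : H2) {a : ℂ} (ha : a ∈ unitDisk) :
    ev f a = ⟪szegoKernel ha, f⟫_ℂ := by
  rw [lp.inner_eq_tsum]
  refine tsum_congr fun n => ?_
  simp [szegoKernel, mul_comm]

def constOne : H2 := lp.single 2 0 1

lemma ev_constOne {a : ℂ} (ha : a ∈ unitDisk) : ev constOne a = 1 := by
  rw [ev_eq_inner_szegoKernel _ ha, constOne, lp.inner_single_right]
  simp [szegoKernel]

lemma inner_constOne_szegoKernel {a : ℂ} (ha : a ∈ unitDisk) :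
    ⟪constOne, szegoKernel ha⟫_ℂ = 1 := by
  rw [constOne, lp.inner_single_left]
  simp [szegoKernel]

lemma eq_zero_of_ev_eq_zero {f : H2} (h : ∀ a ∈ unitDisk, ev f a = 0) : f = 0 := by
  set p : FormalMultilinearSeries ℂ ℂ ℂ := .ofScalars ℂ fun n => f n with hp
  have hradius : 1 ≤ p.radius := by
    simpa using p.le_radius_of_bound ‖f‖ (r := 1) fun n => by
      simpa [hp] using lp.norm_apply_le_norm two_ne_zero f n
  have hsum : p.sum =ᶠ[𝓝 0] 0 := by
    filter_upwards [Metric.ball_mem_nhds (0 : ℂ) one_pos] with z hz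
    rw [Pi.zero_apply, ← h z hz, FormalMultilinearSeries.sum, ev]
    refine tsum_congr fun n => ?_
    rw [hp, FormalMultilinearSeries.ofScalars_apply_eq, smul_eq_mul, mul_comm]
  have hp0 : p = 0 :=
    ((p.hasFPowerSeriesOnBall (zero_lt_one.trans_le hradius)).hasFPowerSeriesAt
      ).eq_zero_of_eventually hsum
  rw [hp, FormalMultilinearSeries.ofScalars_series_eq_zero] at hp0
  ext n
  exact congrFun hp0 n

lemma eq_of_ev_eq {f g : H2} (h : ∀ a ∈ unitDisk, ev f a = ev g a) : f = g :=
  sub_eq_zero.mp <| eq_zero_of_ev_eq_zero fun a ha => by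
    rw [ev_eq_inner_szegoKernel _ ha, inner_sub_right, ← ev_eq_inner_szegoKernel _ ha,
      ← ev_eq_inner_szegoKernel _ ha, h a ha, sub_self]

namespace IsMulOp

variable {φ ψ : ℂ → ℂ} {M N : H2 →L[ℂ] H2}

lemma eq (hM : IsMulOp φ M) (hN : IsMulOp φ N) : M = N :=
  ContinuousLinearMap.ext fun f => eq_of_ev_eq fun a ha => by rw [hM f a ha, hN f a ha]

lemma algebraMap (c : ℂ) : IsMulOp (fun _ => c) (algebraMap ℂ (H2 →L[ℂ] H2) c) :=
  fun f a ha => by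
    rw [Algebra.algebraMap_eq_smul_one, smul_apply, one_apply_eq_self,
      ev_eq_inner_szegoKernel _ ha, ev_eq_inner_szegoKernel _ ha, inner_smul_right]

lemma add (hM : IsMulOp φ M) (hN : IsMulOp ψ N) : IsMulOp (fun z => φ z + ψ z) (M + N) :=
  fun f a ha => by
    rw [ev_eq_inner_szegoKernel _ ha, add_apply, inner_add_right,
      ← ev_eq_inner_szegoKernel _ ha, ← ev_eq_inner_szegoKernel _ ha, hM f a ha, hN f a ha,
      add_mul]

lemma mul (hM : IsMulOp φ M) (hN : IsMulOp ψ N) : IsMulOp (fun z => φ z * ψ z) (M * N) :=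
  fun f a ha => by rw [mul_apply_eq_comp, hM _ a ha, hN f a ha, mul_assoc]

lemma aeval (hM : IsMulOp φ M) (p : Polynomial ℂ) :
    IsMulOp (fun z => p.eval (φ z)) (Polynomial.aeval M p) := by
  induction p using Polynomial.induction_on with
  | C c => simpa using algebraMap c
  | add p q hp hq => simpa using hp.add hq
  | monomial n c ih => simpa [pow_succ, ← mul_assoc] using ih.mul hM

lemma commute (hM : IsMulOp φ M) (hN : IsMulOp ψ N) : M * N = N * M :=
  (hM.mul hN).eq (by simpa only [mul_comm] using hN.mul hM)

lemma inner_szegoKernel_apply_constOne (hM : IsMulOp φ M) {a : ℂ} (ha : a ∈ unitDisk) :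
    ⟪szegoKernel ha, M constOne⟫_ℂ = φ a := by
  rw [← ev_eq_inner_szegoKernel _ ha, hM _ a ha, ev_constOne ha, mul_one]

lemma adjoint_szegoKernel (hM : IsMulOp φ M) {a : ℂ} (ha : a ∈ unitDisk) :
    ContinuousLinearMap.adjoint M (szegoKernel ha) = conj (φ a) • szegoKernel ha :=
  ext_inner_right ℂ fun f => by
    rw [ContinuousLinearMap.adjoint_inner_left, inner_smul_left, conj_conj,
      ← ev_eq_inner_szegoKernel _ ha, ← ev_eq_inner_szegoKernel _ ha, hM f a ha]

lemma inner_constOne_adjoint_szegoKernel (hM : IsMulOp φ M) {a : ℂ} (ha : a ∈ unitDisk) :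
    ⟪constOne, ContinuousLinearMap.adjoint M (szegoKernel ha)⟫_ℂ = conj (φ a) := by
  rw [hM.adjoint_szegoKernel ha, inner_smul_right, inner_constOne_szegoKernel, mul_one]

lemma inner_constOne_aeval_adjoint_szegoKernel (hM : IsMulOp φ M) (p : Polynomial ℂ) {a : ℂ}
    (ha : a ∈ unitDisk) :
    ⟪constOne, Polynomial.aeval (ContinuousLinearMap.adjoint M) p (szegoKernel ha)⟫_ℂ =
      p.eval (conj (φ a)) := by
  rw [ContinuousLinearMap.aeval_apply_of_apply_eq_smul (hM.adjoint_szegoKernel ha),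
    inner_smul_right, inner_constOne_szegoKernel, mul_one]

end IsMulOp

theorem not_minimal_commutant_of_not_univalent_general
    (φ : ℂ → ℂ) (hnu : ¬ Set.InjOn φ unitDisk)
    (Mφ : H2 →L[ℂ] H2) (hM : IsMulOp φ Mφ)
    (Mz : H2 →L[ℂ] H2) (hMz : IsMulOp (fun z => z) Mz) :
    wotClosure (polyAlg Mφ) ≠ commutant Mφ ∧
      ContinuousLinearMap.adjoint Mz ∉
        wotClosure (polyAlg (ContinuousLinearMap.adjoint Mφ)) := by
  obtain ⟨a, ha, b, hb, hab, hne⟩ : ∃ a ∈ unitDisk, ∃ b ∈ unitDisk, φ a = φ b ∧ a ≠ b := by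
    simpa [Set.InjOn] using hnu
  have hpoly : ∀ A ∈ polyAlg Mφ,
      ⟪szegoKernel ha, A constOne⟫_ℂ = ⟪szegoKernel hb, A constOne⟫_ℂ := by
    rintro _ ⟨p, rfl⟩
    simp only [(hM.aeval p).inner_szegoKernel_apply_constOne, hab]
  have hpoly_adjoint : ∀ A ∈ polyAlg (ContinuousLinearMap.adjoint Mφ),
      ⟪constOne, A (szegoKernel ha)⟫_ℂ = ⟪constOne, A (szegoKernel hb)⟫_ℂ := by
    rintro _ ⟨p, rfl⟩
    simp only [hM.inner_constOne_aeval_adjoint_szegoKernel, hab]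
  have hMz_not_mem : Mz ∉ wotClosure (polyAlg Mφ) := fun h => hne <| by
    simpa [hMz.inner_szegoKernel_apply_constOne] using inner_apply_eq_of_mem_wotClosure hpoly h
  refine ⟨fun h => hMz_not_mem (h ▸ hMz.commute hM), fun h => hne ((starRingEnd ℂ).injective ?_)⟩
  simpa [hMz.inner_constOne_adjoint_szegoKernel] using
    inner_apply_eq_of_mem_wotClosure hpoly_adjoint h

/-- If `φ ∈ H^∞(𝔻)` is not univalent, then `M_φ` does not have minimal commutant;
equivalently, `M_z*` does not belong to the WOT-closure of the polynomials in `M_φ*`. -/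
theorem not_minimal_commutant_of_not_univalent
    (φ : ℂ → ℂ) (hφ : Hinf φ) (hnu : ¬ Set.InjOn φ unitDisk)
    (Mφ : H2 →L[ℂ] H2) (hM : IsMulOp φ Mφ)
    (Mz : H2 →L[ℂ] H2) (hMz : IsMulOp (fun z => z) Mz) :
    wotClosure (polyAlg Mφ) ≠ commutant Mφ ∧
      ContinuousLinearMap.adjoint Mz ∉
        wotClosure (polyAlg (ContinuousLinearMap.adjoint Mφ)) :=
  not_minimal_commutant_of_not_univalent_general φ hnu Mφ hM Mz hMz
end
end

section
/- Let φ ∈ H^∞(𝔻) singly cover a nonempty open set W ⊆ φ(𝔻), meaning φ maps some V ⊆ 𝔻 univalently onto W and φ^{-1}(W) = V. Then for each a ∈ V there exists c > 0 such that the function g(z) = (φ(z) − φ(a))/(z − a) satisfies |g(z)| > c for all z ∈ 𝔻; in particular g and 1/g are in H^∞(𝔻). -/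
/-! Injectivity of `φ` near `a` forces `φ'(a) ≠ 0`: otherwise `φ - φ a = ψ ^ n` near `a` for some
`n ≥ 2` and a local coordinate `ψ`, and `ψ` takes the values `w` and `ω * w` (`ω` a primitive
`n`-th root of unity) at two distinct points where `φ` agrees. So `g = dslope φ a` is bounded
below near `a`, and `φ` maps every small ball around `a` inside `V` onto a neighbourhood of
`φ a`. Since `φ⁻¹(W) ∩ 𝔻 = V` and `φ` is injective on `V`, no point of `𝔻` outside that ball is
mapped into the neighbourhood, so `|φ z - φ a| ≥ ε` there, while `|z - a| < 2`. -/

noncomputable section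
open Complex Filter Topology

open Set Metric

theorem AnalyticAt.exists_eventually_pow_eq {g : ℂ → ℂ} {a : ℂ} (hg : AnalyticAt ℂ g a)
    (hga : g a ≠ 0) {n : ℕ} (hn : n ≠ 0) :
    ∃ h : ℂ → ℂ, AnalyticAt ℂ h a ∧ h a ≠ 0 ∧ ∀ᶠ z in 𝓝 a, h z ^ n = g z := by
  obtain ⟨c, hc⟩ := IsAlgClosed.exists_pow_nat_eq (g a) (Nat.pos_of_ne_zero hn)
  have hc0 : c ≠ 0 := by rintro rfl; exact hga (by rw [← hc, zero_pow hn])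
  refine ⟨fun z => c * Complex.exp (Complex.log (g z / g a) / n), ?_, by simp [hc0], ?_⟩
  · have : g a / g a ∈ slitPlane := by rw [div_self hga]; exact one_mem_slitPlane
    exact analyticAt_const.mul (AnalyticAt.cexp (AnalyticAt.div
      ((hg.div analyticAt_const hga).clog this) analyticAt_const (Nat.cast_ne_zero.mpr hn)))
  · filter_upwards [hg.continuousAt.eventually_ne hga] with z hz
    rw [mul_pow, ← exp_nat_mul, mul_div_cancel₀ _ (Nat.cast_ne_zero.mpr hn),
      exp_log (div_ne_zero hz hga), hc, mul_div_cancel₀ _ hga]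

theorem Complex.not_injOn_pow_of_mem_nhds_zero {U : Set ℂ} (hU : U ∈ 𝓝 0) {n : ℕ}
    (hn : 1 < n) : ¬ InjOn (· ^ n) U := by
  intro hinj
  obtain ⟨ω, hω⟩ : ∃ ω : ℂ, IsPrimitiveRoot ω n := ⟨_, isPrimitiveRoot_exp n (by omega)⟩
  have hωU : U ∩ (ω * ·) ⁻¹' U ∈ 𝓝 (0 : ℂ) :=
    inter_mem hU ((continuous_const_mul ω).tendsto' 0 0 (mul_zero ω) hU)
  obtain ⟨w, ⟨hwU, hωwU⟩, hw0⟩ :=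
    ((eventually_nhdsWithin_of_eventually_nhds hωU).and self_mem_nhdsWithin).exists
      (f := 𝓝[≠] (0 : ℂ))
  have hωw : ω * w = w := hinj hωwU hwU (by simp [mul_pow, hω.pow_eq_one])
  exact hω.ne_one hn (mul_right_cancel₀ hw0 (hωw.trans (one_mul w).symm))

theorem AnalyticAt.exists_eventually_sub_eq_pow {f : ℂ → ℂ} {a : ℂ} (hf : AnalyticAt ℂ f a)
    {n : ℕ} (hn : n ≠ 0) (hord : analyticOrderAt (f · - f a) a = n) :
    ∃ ψ : ℂ → ℂ, ∃ ψ' ≠ 0, HasStrictDerivAt ψ ψ' a ∧ ψ a = 0 ∧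
      ∀ᶠ z in 𝓝 a, f z - f a = ψ z ^ n := by
  obtain ⟨g, hg, hga, hfg⟩ := (hf.sub analyticAt_const).analyticOrderAt_eq_natCast.mp hord
  obtain ⟨h, hh, hha, hhg⟩ := hg.exists_eventually_pow_eq hga hn
  refine ⟨fun z => (z - a) * h z, h a, hha, ?_, by simp, ?_⟩
  · have hlin : HasStrictDerivAt (fun z => z - a) 1 a := (hasStrictDerivAt_id a).sub_const a
    simpa using hlin.fun_mul hh.hasStrictDerivAt
  · filter_upwards [hfg, hhg] with z hfz hhz
    simp only [Pi.sub_apply, smul_eq_mul] at hfz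
    rw [hfz, mul_pow, hhz]

theorem AnalyticAt.deriv_ne_zero_of_injOn {f : ℂ → ℂ} {a : ℂ} {s : Set ℂ}
    (hf : AnalyticAt ℂ f a) (hs : s ∈ 𝓝 a) (hinj : InjOn f s) : deriv f a ≠ 0 := by
  intro hderiv
  have hord_ne_top : analyticOrderAt (f · - f a) a ≠ ⊤ := by
    rw [Ne, analyticOrderAt_eq_top]
    intro hconst
    obtain ⟨z, ⟨hz, hzs⟩, hza⟩ :=
      ((eventually_nhdsWithin_of_eventually_nhds (hconst.and hs)).and
        self_mem_nhdsWithin).exists (f := 𝓝[≠] a)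
    exact hza (hinj hzs (mem_of_mem_nhds hs) (sub_eq_zero.mp hz))
  have hord_two : 2 ≤ analyticOrderAt (f · - f a) a := by
    have : analyticOrderAt (deriv f) a ≠ 0 := by simp [analyticOrderAt_eq_zero, hf.deriv, hderiv]
    rw [← hf.analyticOrderAt_deriv_add_one]
    exact add_le_add_left (Order.one_le_iff_ne_zero.mpr this) 1
  lift analyticOrderAt (f · - f a) a to ℕ using hord_ne_top with n hn
  have hn2 : 1 < n := by exact_mod_cast hord_two
  obtain ⟨ψ, ψ', hψ', hψ, hψa, hfψ⟩ := hf.exists_eventually_sub_eq_pow (by omega) hn.symm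
  have himage : ψ '' (s ∩ {z | f z - f a = ψ z ^ n}) ∈ 𝓝 0 := by
    rw [← hψa, ← hψ.map_nhds_eq hψ']
    exact image_mem_map (inter_mem hs hfψ)
  refine Complex.not_injOn_pow_of_mem_nhds_zero himage hn2 ?_
  rintro _ ⟨z₁, ⟨hz₁, hf₁⟩, rfl⟩ _ ⟨z₂, ⟨hz₂, hf₂⟩, rfl⟩ heq
  rw [hinj hz₁ hz₂ (sub_left_inj.mp (hf₁.trans (heq.trans hf₂.symm)))]

section DSlope

variable {𝕜 E : Type*} [NontriviallyNormedField 𝕜] [NormedAddCommGroup E] [NormedSpace 𝕜 E]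

theorem norm_dslope_of_ne (f : 𝕜 → E) {a z : 𝕜} (hz : z ≠ a) :
    ‖dslope f a z‖ = ‖f z - f a‖ / ‖z - a‖ := by
  rw [dslope_of_ne f hz, slope_def_module, norm_smul, norm_inv, inv_mul_eq_div]

theorem DifferentiableAt.exists_forall_norm_dslope_le {f : 𝕜 → E} {a : 𝕜} {U : Set 𝕜} {C : ℝ}
    (hf : DifferentiableAt 𝕜 f a) (ha : a ∈ U) (hC : ∀ z ∈ U, ‖f z‖ ≤ C) :
    ∃ M, ∀ z ∈ U, ‖dslope f a z‖ ≤ M := by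
  obtain ⟨ρ, hρ, hnear⟩ := Metric.eventually_nhds_iff.mp <|
    (continuousAt_dslope_same.mpr hf).norm.eventually (gt_mem_nhds (lt_add_one ‖dslope f a a‖))
  refine ⟨max (‖dslope f a a‖ + 1) (2 * C / ρ), fun z hz => ?_⟩
  rcases lt_or_ge ‖z - a‖ ρ with hza | hza
  · exact (hnear (by rwa [dist_eq_norm])).le.trans (le_max_left _ _)
  · have hdiff : ‖f z - f a‖ ≤ 2 * C := (norm_sub_le _ _).trans (by linarith [hC z hz, hC a ha])
    rw [norm_dslope_of_ne f (sub_ne_zero.mp (norm_pos_iff.mp (hρ.trans_le hza)))]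
    exact le_max_of_le_right (div_le_div₀ (by linarith [norm_nonneg (f z - f a)]) hdiff hρ hza)

end DSlope

section InjOn

variable {𝕜 : Type*} [NontriviallyNormedField 𝕜] [CompleteSpace 𝕜] {f : 𝕜 → 𝕜} {f' a : 𝕜}
  {U V : Set 𝕜}

theorem HasStrictDerivAt.exists_pos_forall_le_norm_sub (hf : HasStrictDerivAt f f' a)
    (hf' : f' ≠ 0) (hV : V ∈ 𝓝 a) (hinj : InjOn f V) (hUV : ∀ z ∈ U, f z ∈ f '' V → z ∈ V)
    {δ : ℝ} (hδ : 0 < δ) : ∃ ε > 0, ∀ z ∈ U, δ ≤ ‖z - a‖ → ε ≤ ‖f z - f a‖ := by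
  have himage : f '' (V ∩ ball a δ) ∈ 𝓝 (f a) := by
    rw [← hf.map_nhds_eq hf']
    exact image_mem_map (inter_mem hV (ball_mem_nhds a hδ))
  obtain ⟨ε, hε, hball⟩ := Metric.mem_nhds_iff.mp himage
  refine ⟨ε, hε, fun z hz hza => not_lt.mp fun hlt => ?_⟩
  obtain ⟨w, ⟨hwV, hwa⟩, hwz⟩ := hball (mem_ball_iff_norm.mpr hlt)
  rw [hinj hwV (hUV z hz ⟨w, hwV, hwz⟩) hwz, mem_ball_iff_norm] at hwa
  linarith

theorem HasStrictDerivAt.exists_pos_forall_lt_norm_dslope (hf : HasStrictDerivAt f f' a)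
    (hf' : f' ≠ 0) (hV : V ∈ 𝓝 a) (hinj : InjOn f V) (hUV : ∀ z ∈ U, f z ∈ f '' V → z ∈ V)
    (hU : Bornology.IsBounded U) : ∃ c > 0, ∀ z ∈ U, c < ‖dslope f a z‖ := by
  have hfa : ‖dslope f a a‖ = ‖f'‖ := by rw [dslope_same, hf.hasDerivAt.deriv]
  obtain ⟨δ, hδ, hnear⟩ := Metric.eventually_nhds_iff.mp <|
    (continuousAt_dslope_same.mpr hf.hasDerivAt.differentiableAt).norm.eventually
      (lt_mem_nhds ((half_lt_self (norm_pos_iff.mpr hf')).trans_eq hfa.symm))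
  obtain ⟨R, hR, hUR⟩ := hU.subset_ball_lt 0 a
  obtain ⟨ε, hε, hfar⟩ := hf.exists_pos_forall_le_norm_sub hf' hV hinj hUV hδ
  refine ⟨min (‖f'‖ / 2) (ε / R), by positivity, fun z hz => ?_⟩
  rcases lt_or_ge ‖z - a‖ δ with hza | hza
  · exact (min_le_left _ _).trans_lt (hnear (by rwa [dist_eq_norm]))
  · have hza₀ : 0 < ‖z - a‖ := hδ.trans_le hza
    have hzR : ‖z - a‖ < R := mem_ball_iff_norm.mp (hUR hz)
    calc min (‖f'‖ / 2) (ε / R) ≤ ε / R := min_le_right _ _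
      _ < ε / ‖z - a‖ := div_lt_div_of_pos_left hε hza₀ hzR
      _ ≤ ‖dslope f a z‖ := by
        rw [norm_dslope_of_ne f (sub_ne_zero.mp (norm_pos_iff.mp hza₀))]
        gcongr
        exact hfar z hz hza

end InjOn

theorem difference_quotient_bounded_below_of_singly_covers_general
    (φ : ℂ → ℂ) (hφ : Hinf φ) (W V : Set ℂ)
    (hWopen : IsOpen W)
    (hV : V ⊆ unitDisk) (hinj : Set.InjOn φ V) (himg : φ '' V = W)
    (hpre : unitDisk ∩ φ ⁻¹' W = V)
    (a : ℂ) (ha : a ∈ V) :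
    ∃ g : ℂ → ℂ, DifferentiableOn ℂ g unitDisk ∧
      (∀ z ∈ unitDisk, φ z - φ a = (z - a) * g z) ∧
      (∃ c > (0:ℝ), ∀ z ∈ unitDisk, c < ‖g z‖) ∧
      Hinf g ∧ Hinf (fun z => (g z)⁻¹) := by
  obtain ⟨hφd, C, hC⟩ := hφ
  have hdisk : unitDisk ∈ 𝓝 a := isOpen_ball.mem_nhds (hV ha)
  have hVa : V ∈ 𝓝 a :=
    (hpre ▸ hφd.continuousOn.isOpen_inter_preimage isOpen_ball hWopen : IsOpen V).mem_nhds ha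
  have hφa : AnalyticAt ℂ φ a := hφd.analyticAt hdisk
  have hsingly : ∀ z ∈ unitDisk, φ z ∈ φ '' V → z ∈ V :=
    fun z hz hzW => hpre ▸ ⟨hz, himg ▸ hzW⟩
  have hg : DifferentiableOn ℂ (dslope φ a) unitDisk := (differentiableOn_dslope hdisk).mpr hφd
  obtain ⟨c, hc, hlow⟩ := hφa.hasStrictDerivAt.exists_pos_forall_lt_norm_dslope
    (hφa.deriv_ne_zero_of_injOn hVa hinj) hVa hinj hsingly isBounded_ball
  refine ⟨dslope φ a, hg, fun z _ => (sub_smul_dslope φ a z).symm, ⟨c, hc, hlow⟩,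
    ⟨hg, hφa.differentiableAt.exists_forall_norm_dslope_le (hV ha) hC⟩,
    hg.inv fun z hz => norm_pos_iff.mp (hc.trans (hlow z hz)), c⁻¹, fun z hz => ?_⟩
  rw [norm_inv]
  exact inv_anti₀ hc (hlow z hz).le

/-- If `φ ∈ H^∞(𝔻)` singly covers a nonempty open set `W ⊆ φ(𝔻)` (it maps `V ⊆ 𝔻`
univalently onto `W` and `φ⁻¹(W) ∩ 𝔻 = V`), then for each `a ∈ V` the difference quotient
`g(z) = (φ(z) − φ(a))/(z − a)` is bounded below in modulus on `𝔻`; in particular, both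
`g` and `1/g` belong to `H^∞(𝔻)`. -/
theorem difference_quotient_bounded_below_of_singly_covers
    (φ : ℂ → ℂ) (hφ : Hinf φ) (W V : Set ℂ)
    (hWopen : IsOpen W) (hWne : W.Nonempty) (hWsub : W ⊆ φ '' unitDisk)
    (hV : V ⊆ unitDisk) (hinj : Set.InjOn φ V) (himg : φ '' V = W)
    (hpre : unitDisk ∩ φ ⁻¹' W = V)
    (a : ℂ) (ha : a ∈ V) :
    ∃ g : ℂ → ℂ, DifferentiableOn ℂ g unitDisk ∧
      (∀ z ∈ unitDisk, φ z - φ a = (z - a) * g z) ∧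
      (∃ c > (0:ℝ), ∀ z ∈ unitDisk, c < ‖g z‖) ∧
      Hinf g ∧ Hinf (fun z => (g z)⁻¹) :=
  difference_quotient_bounded_below_of_singly_covers_general φ hφ W V hWopen hV hinj himg hpre a ha
end
end
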